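/- arXiv:2504.05138 — 3 statements merged into one kernel-verified Lean document; each statement's English description precedes it below -/
import Mathlib

section
/- Let H be a real inner product space, V a finite index set, q_v > 0 weights with ∑_{v∈V} q_v = 1, θ > 0, and P_v ≥ 0 coefficients with P_v ≤ θ·q_v for all v. Let η > 0, G ≥ 0, let E ≥ 1 be an integer, and let g_v^t ∈ H with ‖g_v^t‖ ≤ G for all v ∈ V and t = 0, …, E−1. Define w_v^0 = u, w_v^{t+1} = w_v^t − η·g_v^t, and w̄^0 = u, w̄^{t+1} = w̄^t − η·∑_{v∈V} P_v·g_v^t. Then for every t with 0 ≤ t ≤ E: ∑_{v∈V} P_v·‖w̄^t − w_v^t‖² ≤ η²·E²·G²·( θ·(∑_{v∈V} P_v − 1)² + ∑_{v∈V} P_v ). -/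
/-!
Unrolling both recursions gives `w̄ t - w v t = η • (y v - c)` with `y v = ∑_{i<t} g v i`
and `c = ∑ P v • y v`, where `‖y v‖ ≤ t G`. Expanding the square around `c` yields
`∑ P v ‖y v - c‖² = ∑ P v ‖y v‖² + (S - 2) ‖c‖²` with `S = ∑ P v`, which is at most
`S (1 + (S - 1)²) (t G)²`; finally `S ≤ θ ∑ q v = θ`.
-/

open Finset

lemma eq_sub_smul_sum_range_of_succ_eq {R M : Type*} [Ring R] [AddCommGroup M] [Module R M]
    {x d : ℕ → M} {η : R} {E : ℕ} (h : ∀ t < E, x (t + 1) = x t - η • d t) :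
    ∀ t ≤ E, x t = x 0 - η • ∑ i ∈ range t, d i := by
  intro t ht
  induction t with
  | zero => simp
  | succ n ih => rw [h n ht, ih (Nat.le_of_succ_le ht), sum_range_succ, smul_add, sub_sub]

section WeightedSpread

variable {H V : Type*} [NormedAddCommGroup H] [InnerProductSpace ℝ H] [Fintype V]

lemma sum_mul_norm_sub_weighted_sum_sq (P : V → ℝ) (y : V → H) :
    ∑ v, P v * ‖y v - ∑ w, P w • y w‖ ^ 2
      = ∑ v, P v * ‖y v‖ ^ 2 + (∑ v, P v - 2) * ‖∑ w, P w • y w‖ ^ 2 := by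
  set c := ∑ w, P w • y w
  have hinner : ∑ v, P v * inner ℝ (y v) c = ‖c‖ ^ 2 := by
    calc ∑ v, P v * inner ℝ (y v) c = ∑ v, inner ℝ (P v • y v) c := by
          simp only [real_inner_smul_left]
      _ = ‖c‖ ^ 2 := by rw [← sum_inner, real_inner_self_eq_norm_sq]
  simp_rw [norm_sub_sq_real, mul_add, mul_sub, sum_add_distrib, sum_sub_distrib,
    mul_left_comm _ (2 : ℝ), ← mul_sum, hinner, ← sum_mul]
  ring

lemma norm_weighted_sum_le {P : V → ℝ} (hP : ∀ v, 0 ≤ P v) {y : V → H} {K : ℝ}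
    (hy : ∀ v, ‖y v‖ ≤ K) : ‖∑ v, P v • y v‖ ≤ (∑ v, P v) * K := by
  calc ‖∑ v, P v • y v‖ ≤ ∑ v, ‖P v • y v‖ := norm_sum_le _ _
    _ ≤ ∑ v, P v * K := sum_le_sum fun v _ => by
        rw [norm_smul, Real.norm_of_nonneg (hP v)]
        exact mul_le_mul_of_nonneg_left (hy v) (hP v)
    _ = (∑ v, P v) * K := (sum_mul _ _ _).symm

/-- The correction term `(S - 2) ‖c‖²` is nonpositive when `S ≤ 2`; otherwise `‖c‖ ≤ S K`
and `(S - 2) S² ≤ S (S - 1)²`. -/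
lemma sum_mul_norm_sub_weighted_sum_sq_le {P : V → ℝ} (hP : ∀ v, 0 ≤ P v) {y : V → H}
    {K : ℝ} (hy : ∀ v, ‖y v‖ ≤ K) :
    ∑ v, P v * ‖y v - ∑ w, P w • y w‖ ^ 2
      ≤ (∑ v, P v) * (1 + (∑ v, P v - 1) ^ 2) * K ^ 2 := by
  set S := ∑ v, P v
  set c := ∑ w, P w • y w
  have hS : 0 ≤ S := sum_nonneg fun v _ => hP v
  have hy2 : ∀ v, ‖y v‖ ^ 2 ≤ K ^ 2 := fun v => pow_le_pow_left₀ (norm_nonneg _) (hy v) 2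
  have hsq : ∑ v, P v * ‖y v‖ ^ 2 ≤ S * K ^ 2 := by
    rw [sum_mul]
    exact sum_le_sum fun v _ => mul_le_mul_of_nonneg_left (hy2 v) (hP v)
  have hc2 : ‖c‖ ^ 2 ≤ (S * K) ^ 2 :=
    pow_le_pow_left₀ (norm_nonneg _) (norm_weighted_sum_le hP hy) 2
  have hcorr : (S - 2) * ‖c‖ ^ 2 ≤ S * (S - 1) ^ 2 * K ^ 2 := by
    rcases le_or_gt S 2 with hS2 | hS2
    · have : (S - 2) * ‖c‖ ^ 2 ≤ 0 := mul_nonpos_of_nonpos_of_nonneg (by linarith) (sq_nonneg _)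
      have : 0 ≤ S * (S - 1) ^ 2 * K ^ 2 := by positivity
      linarith
    · calc (S - 2) * ‖c‖ ^ 2 ≤ (S - 2) * (S * K) ^ 2 :=
            mul_le_mul_of_nonneg_left hc2 (by linarith)
        _ ≤ S * (S - 1) ^ 2 * K ^ 2 := by nlinarith [mul_nonneg hS (sq_nonneg K)]
  rw [sum_mul_norm_sub_weighted_sum_sq]
  linarith

end WeightedSpread

theorem stmt6_general {H : Type*} [NormedAddCommGroup H] [InnerProductSpace ℝ H]
    {V : Type*} [Fintype V]
    (q : V → ℝ) (hqsum : ∑ v, q v = 1)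
    (θ : ℝ)
    (P : V → ℝ) (hP0 : ∀ v, 0 ≤ P v) (hPθ : ∀ v, P v ≤ θ * q v)
    (η : ℝ) (G : ℝ)
    (E : ℕ)
    (g : V → ℕ → H) (hg : ∀ v, ∀ t < E, ‖g v t‖ ≤ G)
    (u : H) (w : V → ℕ → H) (wbar : ℕ → H)
    (hw0 : ∀ v, w v 0 = u)
    (hw : ∀ v, ∀ t < E, w v (t + 1) = w v t - η • g v t)
    (hwbar0 : wbar 0 = u)
    (hwbar : ∀ t < E, wbar (t + 1) = wbar t - η • ∑ v, P v • g v t) :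
    ∀ t ≤ E, ∑ v, P v * ‖wbar t - w v t‖ ^ 2
      ≤ η ^ 2 * (E : ℝ) ^ 2 * G ^ 2 * (θ * (∑ v, P v - 1) ^ 2 + ∑ v, P v) := by
  intro t ht
  set S := ∑ v, P v
  set y : V → H := fun v => ∑ i ∈ range t, g v i
  have hdiff : ∀ v, wbar t - w v t = η • (y v - ∑ v', P v' • y v') := by
    intro v
    rw [eq_sub_smul_sum_range_of_succ_eq hwbar t ht, eq_sub_smul_sum_range_of_succ_eq (hw v) t ht,
      hwbar0, hw0, sum_comm]
    simp only [y, smul_sum, smul_sub]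
    abel
  have hy : ∀ v, ‖y v‖ ≤ t * G := fun v => by
    simpa using norm_sum_le_of_le (range t) fun i hi => hg v i ((mem_range.mp hi).trans_le ht)
  have hSθ : S ≤ θ :=
    (sum_le_sum fun v _ => hPθ v).trans_eq (by rw [← mul_sum, hqsum, mul_one])
  have hS : 0 ≤ S := sum_nonneg fun v _ => hP0 v
  have htE : (t : ℝ) ^ 2 ≤ (E : ℝ) ^ 2 := by gcongr
  calc ∑ v, P v * ‖wbar t - w v t‖ ^ 2 = η ^ 2 * ∑ v, P v * ‖y v - ∑ v', P v' • y v'‖ ^ 2 := by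
        simp only [hdiff, norm_smul, mul_pow, Real.norm_eq_abs, sq_abs, mul_sum]
        exact sum_congr rfl fun v _ => by ring
    _ ≤ η ^ 2 * (S * (1 + (S - 1) ^ 2) * (t * G) ^ 2) :=
        mul_le_mul_of_nonneg_left (sum_mul_norm_sub_weighted_sum_sq_le hP0 hy) (sq_nonneg η)
    _ = η ^ 2 * G ^ 2 * (S * (1 + (S - 1) ^ 2) * (t : ℝ) ^ 2) := by ring
    _ ≤ η ^ 2 * G ^ 2 * ((θ * (S - 1) ^ 2 + S) * (E : ℝ) ^ 2) := by
        have hmass : S * (1 + (S - 1) ^ 2) ≤ θ * (S - 1) ^ 2 + S := by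
          linarith [mul_le_mul_of_nonneg_right hSθ (sq_nonneg (S - 1))]
        have : 0 ≤ θ * (S - 1) ^ 2 + S := add_nonneg (mul_nonneg (hS.trans hSθ) (sq_nonneg _)) hS
        gcongr
    _ = η ^ 2 * (E : ℝ) ^ 2 * G ^ 2 * (θ * (S - 1) ^ 2 + S) := by ring

/-- Bound on the weighted discrepancy between the virtual global iterate `w̄ t` and the
local iterates `w v t` during one global round of `E` local epochs with learning rate `η`,
under bounded directions `‖g v t‖ ≤ G` and coefficients `0 ≤ P v ≤ θ * q v` where the
weights `q v > 0` sum to one: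
`∑ v, P v * ‖w̄ t − w v t‖² ≤ η² E² G² (θ (∑ v, P v − 1)² + ∑ v, P v)` for all `t ≤ E`. -/
theorem stmt6 {H : Type*} [NormedAddCommGroup H] [InnerProductSpace ℝ H]
    {V : Type*} [Fintype V]
    (q : V → ℝ) (hq : ∀ v, 0 < q v) (hqsum : ∑ v, q v = 1)
    (θ : ℝ) (hθ : 0 < θ)
    (P : V → ℝ) (hP0 : ∀ v, 0 ≤ P v) (hPθ : ∀ v, P v ≤ θ * q v)
    (η : ℝ) (hη : 0 < η) (G : ℝ) (hG : 0 ≤ G)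
    (E : ℕ) (hE : 1 ≤ E)
    (g : V → ℕ → H) (hg : ∀ v, ∀ t < E, ‖g v t‖ ≤ G)
    (u : H) (w : V → ℕ → H) (wbar : ℕ → H)
    (hw0 : ∀ v, w v 0 = u)
    (hw : ∀ v, ∀ t < E, w v (t + 1) = w v t - η • g v t)
    (hwbar0 : wbar 0 = u)
    (hwbar : ∀ t < E, wbar (t + 1) = wbar t - η • ∑ v, P v • g v t) :
    ∀ t ≤ E, ∑ v, P v * ‖wbar t - w v t‖ ^ 2
      ≤ η ^ 2 * (E : ℝ) ^ 2 * G ^ 2 * (θ * (∑ v, P v - 1) ^ 2 + ∑ v, P v) :=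
  stmt6_general q hqsum θ P hP0 hPθ η G E g hg u w wbar hw0 hw hwbar0 hwbar
end

section
/- Let V ≥ 1 and M_1, …, M_V be positive reals, let m be a real number, and let k be an integer with 1 ≤ k ≤ V−1 and m − V + k > 0. Define F(k) = (∑_{v=1}^{k} M_v)²/(m − V + k) + ∑_{v=k+1}^{V} M_v². Then F(k) ≥ F(k+1), i.e., F is monotonically non-increasing in k on the range where m − V + k > 0. -/
/-- Monotonicity of the candidate objective value
`F(k) = (∑_{v=1}^{k} M v)² / (m − V + k) + ∑_{v=k+1}^{V} (M v)²`:
for `1 ≤ k ≤ V − 1` and `m − V + k > 0`, `F(k) ≥ F(k+1)`. -/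
theorem stmt10 (V : ℕ) (hV : 1 ≤ V)
    (M : ℕ → ℝ) (hM : ∀ v ∈ Finset.Icc 1 V, 0 < M v)
    (m : ℝ) (k : ℕ) (hk1 : 1 ≤ k) (hk2 : k ≤ V - 1)
    (hpos : 0 < m - (V : ℝ) + (k : ℝ)) :
    (∑ v ∈ Finset.Icc 1 k, M v) ^ 2 / (m - (V : ℝ) + (k : ℝ))
        + ∑ v ∈ Finset.Icc (k + 1) V, (M v) ^ 2
      ≥ (∑ v ∈ Finset.Icc 1 (k + 1), M v) ^ 2 / (m - (V : ℝ) + ((k : ℝ) + 1))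
        + ∑ v ∈ Finset.Icc (k + 2) V, (M v) ^ 2 := by
  have hkV : k + 1 ≤ V := by omega
  have h1 : ∑ v ∈ Finset.Icc 1 (k + 1), M v
      = (∑ v ∈ Finset.Icc 1 k, M v) + M (k + 1) :=
    Finset.sum_Icc_succ_top (by omega) M
  have hsplit : Finset.Icc (k + 1) V = insert (k + 1) (Finset.Icc (k + 2) V) := by
    ext x
    simp only [Finset.mem_Icc, Finset.mem_insert]
    omega
  have h2 : ∑ v ∈ Finset.Icc (k + 1) V, (M v) ^ 2
      = (M (k + 1)) ^ 2 + ∑ v ∈ Finset.Icc (k + 2) V, (M v) ^ 2 := by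
    rw [hsplit, Finset.sum_insert (by simp)]
  set S := ∑ v ∈ Finset.Icc 1 k, M v with hS
  set a := M (k + 1) with ha
  set c := m - (V : ℝ) + (k : ℝ) with hc
  have hc1 : (0:ℝ) < c + 1 := by linarith
  have key : (S + a) ^ 2 / (c + 1) ≤ S ^ 2 / c + a ^ 2 := by
    have heq : S ^ 2 / c + a ^ 2 = (S ^ 2 + a ^ 2 * c) / c := by
      field_simp
    rw [heq, div_le_div_iff₀ hc1 hpos]
    nlinarith [sq_nonneg (S - a * c)]
  have hformula : m - (V : ℝ) + ((k : ℝ) + 1) = c + 1 := by rw [hc]; ring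
  rw [h1, h2, hformula]
  linarith [key]
end

section
/- Let H be a real inner product space, V a finite index set, and for each v ∈ V let 𝟙_v be independent Bernoulli random variables with P(𝟙_v = 1) = p_v where 0 < p_v ≤ 1. Let G_v, h_v ∈ H be fixed vectors, β_v and q_v ≥ 0 fixed reals, and define the stale-augmented aggregate Δ = ∑_{v∈V} q_v·β_v·h_v + ∑_{v∈V} 𝟙_v·q_v·(G_v − β_v·h_v)/p_v. Then E[ ‖ Δ − ∑_{v∈V} q_v·G_v ‖² ] = ∑_{v∈V} ((1 − p_v)/p_v)·q_v²·‖G_v − β_v·h_v‖². -/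
/-!
The stale terms cancel: `Δ - ∑ v, q v • G v = ∑ v, (𝟙_v / p v - 1) • q v • (G v - β v • h v)`.
The coefficients `𝟙_v / p v - 1` are independent and centred, so on expanding the squared norm
the cross terms integrate to zero and only `∑ v, E[(𝟙_v / p v - 1)²] * ‖q v • (G v - β v • h v)‖²`
survives, with the Bernoulli second moment `E[(𝟙_v / p v - 1)²] = (1 - p v) / p v`.
-/

open MeasureTheory

/-- The product measure on `V → Bool` in which each coordinate is an independent
Bernoulli random variable with success probability `p v`. -/
noncomputable def bernoulliPi {V : Type*} [Fintype V] (p : V → ℝ) (hp1 : ∀ v, p v ≤ 1) :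
    Measure (V → Bool) :=
  Measure.pi fun v =>
    (PMF.bernoulli (Real.toNNReal (p v)) (Real.toNNReal_le_one.mpr (hp1 v))).toMeasure

open ProbabilityTheory

theorem integral_norm_sum_smul_sq {Ω ι H : Type*} [MeasurableSpace Ω] {μ : Measure Ω}
    [NormedAddCommGroup H] [InnerProductSpace ℝ H] [Fintype ι] {X : ι → Ω → ℝ}
    (hindep : Pairwise fun i j => X i ⟂ᵢ[μ] X j) (hX : ∀ i, MemLp (X i) 2 μ)
    (hcent : ∀ i, μ[X i] = 0) (a : ι → H) :
    ∫ ω, ‖∑ i, X i ω • a i‖ ^ 2 ∂μ = ∑ i, (∫ ω, X i ω ^ 2 ∂μ) * ‖a i‖ ^ 2 := by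
  classical
  have hexpand : ∀ ω, ‖∑ i, X i ω • a i‖ ^ 2
      = ∑ i, ∑ j, X i ω * X j ω * inner ℝ (a i) (a j) := by
    intro ω
    simp only [← real_inner_self_eq_norm_sq, sum_inner, inner_sum, real_inner_smul_left,
      real_inner_smul_right, mul_assoc, real_inner_comm (a _) (a _)]
  have hcov : ∀ i j, ∫ ω, X i ω * X j ω ∂μ = if i = j then ∫ ω, X i ω ^ 2 ∂μ else 0 := by
    intro i j
    split_ifs with hij
    · simp only [hij, sq]
    · rw [(hindep hij).integral_fun_mul_eq_mul_integral (hX i).1 (hX j).1, hcent i, zero_mul]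
  have hint : ∀ i j, Integrable (fun ω => X i ω * X j ω * inner ℝ (a i) (a j)) μ :=
    fun i j => ((hX i).integrable_mul (hX j)).mul_const _
  simp_rw [hexpand]
  rw [integral_finsetSum _ fun i _ => integrable_finsetSum _ fun j _ => hint i j]
  refine Finset.sum_congr rfl fun i _ => ?_
  simp only [integral_finsetSum _ fun j _ => hint i j, integral_mul_const, hcov, ite_mul,
    zero_mul, Finset.sum_ite_eq, Finset.mem_univ, if_true, real_inner_self_eq_norm_sq]

theorem integral_bernoulli_toNNReal {p : ℝ} (hp0 : 0 ≤ p) (hp1 : p ≤ 1) (f : Bool → ℝ) :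
    ∫ b, f b ∂(PMF.bernoulli p.toNNReal (Real.toNNReal_le_one.mpr hp1)).toMeasure
      = p * f true + (1 - p) * f false := by
  have hcompl : ((1 - p.toNNReal : NNReal) : ℝ) = 1 - p := by
    rw [NNReal.coe_sub (Real.toNNReal_le_one.mpr hp1), NNReal.coe_one, Real.coe_toNNReal _ hp0]
  rw [PMF.integral_eq_sum, Fintype.sum_bool]
  simp only [PMF.bernoulli_apply, cond_true, cond_false, ENNReal.coe_toReal, hcompl,
    Real.coe_toNNReal _ hp0, smul_eq_mul]

/-- The error of `𝟙 / p`, the inverse-probability-weighted estimate of `1` from a Bernoulli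
indicator `𝟙` of success probability `p`. -/
noncomputable def ipwError (p : ℝ) (b : Bool) : ℝ := (if b then 1 else 0) / p - 1

theorem ipwError_true (p : ℝ) : ipwError p true = p⁻¹ - 1 := by simp [ipwError]

theorem ipwError_false (p : ℝ) : ipwError p false = -1 := by simp [ipwError]

section bernoulliPi

variable {V : Type*} [Fintype V] {p : V → ℝ} {hp1 : ∀ v, p v ≤ 1}

instance : IsProbabilityMeasure (bernoulliPi p hp1) := by
  unfold bernoulliPi; infer_instance

theorem integral_comp_eval_bernoulliPi {v : V} (hp0 : 0 ≤ p v) (f : Bool → ℝ) :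
    ∫ ω, f (ω v) ∂bernoulliPi p hp1 = p v * f true + (1 - p v) * f false := by
  rw [bernoulliPi, integral_comp_eval .of_discrete, integral_bernoulli_toNNReal hp0 (hp1 v)]

theorem iIndepFun_comp_eval_bernoulliPi (f : V → Bool → ℝ) :
    iIndepFun (fun v ω => f v (ω v)) (bernoulliPi p hp1) :=
  iIndepFun_pi fun _ => .of_discrete

theorem integral_ipwError_comp_eval_bernoulliPi {v : V} (hp0 : 0 < p v) :
    ∫ ω, ipwError (p v) (ω v) ∂bernoulliPi p hp1 = 0 := by
  rw [integral_comp_eval_bernoulliPi hp0.le, ipwError_true, ipwError_false]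
  field_simp [hp0.ne']
  ring

theorem integral_ipwError_comp_eval_sq_bernoulliPi {v : V} (hp0 : 0 < p v) :
    ∫ ω, ipwError (p v) (ω v) ^ 2 ∂bernoulliPi p hp1 = (1 - p v) / p v := by
  rw [integral_comp_eval_bernoulliPi hp0.le (ipwError (p v) · ^ 2),
    ipwError_true, ipwError_false]
  field_simp [hp0.ne']
  ring

end bernoulliPi

theorem stale_aggregate_sub_eq_sum_ipwError_smul {H V : Type*} [AddCommGroup H] [Module ℝ H]
    [Fintype V] (p β q : V → ℝ) (G h : V → H) (b : V → Bool) :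
    (∑ v, (q v * β v) • h v + ∑ v, (if b v then (1 : ℝ) else 0) • (q v / p v) • (G v - β v • h v))
        - ∑ v, q v • G v
      = ∑ v, ipwError (p v) (b v) • q v • (G v - β v • h v) := by
  rw [← Finset.sum_add_distrib, ← Finset.sum_sub_distrib]
  refine Finset.sum_congr rfl fun v _ => ?_
  simp only [ipwError, div_eq_mul_inv]
  module

theorem stmt14_general {H : Type*} [NormedAddCommGroup H] [InnerProductSpace ℝ H]
    {V : Type*} [Fintype V]
    (p : V → ℝ) (hp0 : ∀ v, 0 < p v) (hp1 : ∀ v, p v ≤ 1)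
    (G h : V → H) (β q : V → ℝ) :
    (∫ ω : V → Bool,
        ‖(∑ v, (q v * β v) • h v
            + ∑ v, (if ω v then (1 : ℝ) else 0) • (q v / p v) • (G v - β v • h v))
          - ∑ v, q v • G v‖ ^ 2 ∂(bernoulliPi p hp1))
      = ∑ v, ((1 - p v) / p v) * (q v) ^ 2 * ‖G v - β v • h v‖ ^ 2 := by
  simp_rw [stale_aggregate_sub_eq_sum_ipwError_smul]
  have hindep := iIndepFun_comp_eval_bernoulliPi (hp1 := hp1) fun v => ipwError (p v)
  rw [integral_norm_sum_smul_sq (fun _ _ hvw => hindep.indepFun hvw) (fun _ => .of_discrete)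
    fun v => integral_ipwError_comp_eval_bernoulliPi (hp0 v)]
  refine Finset.sum_congr rfl fun v _ => ?_
  rw [integral_ipwError_comp_eval_sq_bernoulliPi (hp0 v), norm_smul, mul_pow, Real.norm_eq_abs,
    sq_abs, mul_assoc]

/-- Variance decomposition of the stale-augmented aggregate
`Δ = ∑ v, q v • β v • h v + ∑ v, 𝟙_v • (q v / p v) • (G v − β v • h v)`:
`E[‖Δ − ∑ v, q v • G v‖²] = ∑ v, ((1 − p v) / p v) * q v ^ 2 * ‖G v − β v • h v‖²`. -/
theorem stmt14 {H : Type*} [NormedAddCommGroup H] [InnerProductSpace ℝ H] [CompleteSpace H]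
    {V : Type*} [Fintype V]
    (p : V → ℝ) (hp0 : ∀ v, 0 < p v) (hp1 : ∀ v, p v ≤ 1)
    (G h : V → H) (β q : V → ℝ) (hq : ∀ v, 0 ≤ q v) :
    (∫ ω : V → Bool,
        ‖(∑ v, (q v * β v) • h v
            + ∑ v, (if ω v then (1 : ℝ) else 0) • (q v / p v) • (G v - β v • h v))
          - ∑ v, q v • G v‖ ^ 2 ∂(bernoulliPi p hp1))
      = ∑ v, ((1 - p v) / p v) * (q v) ^ 2 * ‖G v - β v • h v‖ ^ 2 :=
  stmt14_general p hp0 hp1 G h β q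
end
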